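/- arXiv:1503.04168 — 2 statements merged into one kernel-verified Lean document; each statement's English description precedes it below -/
import Mathlib

section
/- The two-dimensional solvable Lie algebra with basis (P, D) satisfying [D,P] = −P admits the following two distinct realizations as vector fields that are conjugate via a change of basis adapted to rotation: in the algebra g_f (f≠0), the element P_f = ∂_t − (f/2)(−y∂_x + x∂_y − v∂_u + u∂_v) together with D₁ of g_f satisfies [D₁, P_f] = −P_f, mirroring the relation [D₁, ∂_t] = −∂_t in g₀. -/
/-- Lie bracket of vector fields on ℝ⁹ (coordinates `t,x,y,p,u,v,ω,φ,T` = indices 0..8). -/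
noncomputable def bracket (V W : (Fin 9 → ℝ) → (Fin 9 → ℝ)) : (Fin 9 → ℝ) → (Fin 9 → ℝ) :=
  fun z => fderiv ℝ W z (V z) - fderiv ℝ V z (W z)

/-- The basis element `D₁` of the maximal Lie invariance algebra `g_f` of the
rotating primitive equations (with `f̂ = f/2`):
`D₁ = t∂_t + f̂ty∂_x − f̂tx∂_y − (u−f̂tv−f̂y)∂_u − (v+f̂tu+f̂x)∂_v − ω∂_ω
      − (2φ+f̂²(x²+y²))∂_φ − 2T∂_T`. -/
noncomputable def D1f (f : ℝ) : (Fin 9 → ℝ) → (Fin 9 → ℝ) := fun z =>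
  ![z 0, (f/2) * z 0 * z 2, -((f/2) * z 0 * z 1), 0,
    -(z 4 - (f/2) * z 0 * z 5 - (f/2) * z 2),
    -(z 5 + (f/2) * z 0 * z 4 + (f/2) * z 1),
    -z 6, -(2 * z 7 + (f/2)^2 * ((z 1)^2 + (z 2)^2)), -2 * z 8]

/-- The element `P_f = ∂_t − f̂ J = ∂_t − (f/2)(−y∂_x + x∂_y − v∂_u + u∂_v)`. -/
noncomputable def Pf (f : ℝ) : (Fin 9 → ℝ) → (Fin 9 → ℝ) := fun z =>
  ![1, (f/2) * z 2, -((f/2) * z 1), 0, (f/2) * z 5, -((f/2) * z 4), 0, 0, 0]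


section
variable {α : Type*} (a0 a1 a2 a3 a4 a5 a6 a7 a8 : α)
@[simp] lemma cons_val_five' : (![a0,a1,a2,a3,a4,a5,a6,a7,a8] : Fin 9 → α) 5 = a5 := rfl
@[simp] lemma cons_val_six' : (![a0,a1,a2,a3,a4,a5,a6,a7,a8] : Fin 9 → α) 6 = a6 := rfl
@[simp] lemma cons_val_seven' : (![a0,a1,a2,a3,a4,a5,a6,a7,a8] : Fin 9 → α) 7 = a7 := rfl
@[simp] lemma cons_val_eight' : (![a0,a1,a2,a3,a4,a5,a6,a7,a8] : Fin 9 → α) 8 = a8 := rfl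
end

open ContinuousLinearMap in
noncomputable def pr (i : Fin 9) : (Fin 9 → ℝ) →L[ℝ] ℝ := ContinuousLinearMap.proj i

open ContinuousLinearMap in
noncomputable def D1L (f : ℝ) (z : Fin 9 → ℝ) : (Fin 9 → ℝ) →L[ℝ] (Fin 9 → ℝ) :=
  ContinuousLinearMap.pi
    ![pr 0,
      (f/2 * z 2) • pr 0 + (f/2 * z 0) • pr 2,
      -((f/2 * z 1) • pr 0 + (f/2 * z 0) • pr 1),
      0,
      -(pr 4) + ((f/2 * z 5) • pr 0 + (f/2 * z 0) • pr 5) + (f/2) • pr 2,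
      -(pr 5) - ((f/2 * z 4) • pr 0 + (f/2 * z 0) • pr 4) - (f/2) • pr 1,
      -(pr 6),
      -((2:ℝ) • pr 7) - ((f/2)^2 * (2 * z 1)) • pr 1 - ((f/2)^2 * (2 * z 2)) • pr 2,
      -((2:ℝ) • pr 8)]

open ContinuousLinearMap in
noncomputable def PfL (f : ℝ) : (Fin 9 → ℝ) →L[ℝ] (Fin 9 → ℝ) :=
  ContinuousLinearMap.pi
    ![0, (f/2) • pr 2, -((f/2) • pr 1), 0, (f/2) • pr 5, -((f/2) • pr 4), 0, 0, 0]

lemma hApply (i : Fin 9) (z : Fin 9 → ℝ) :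
    HasFDerivAt (fun w : Fin 9 → ℝ => w i) (pr i) z := hasFDerivAt_apply i z

lemma hasFDerivAt_D1f (f : ℝ) (z : Fin 9 → ℝ) : HasFDerivAt (D1f f) (D1L f z) z := by
  apply hasFDerivAt_pi''
  intro i
  fin_cases i <;>
    simp only [D1f, D1L, ContinuousLinearMap.proj_pi, Matrix.cons_val_zero, Matrix.cons_val_one,
      Matrix.head_cons, Matrix.cons_val_two, Matrix.tail_cons, Matrix.cons_val_three,
      Matrix.cons_val_four, Matrix.cons_val_succ, pow_two, neg_mul, Fin.isValue]
  · exact hApply 0 z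
  · refine (((hApply 0 z).const_mul (f/2)).mul (hApply 2 z)).congr_fderiv ?_
    ext v; simp [pr, Matrix.cons_val_succ]; try ring
  · refine ((((hApply 0 z).const_mul (f/2)).mul (hApply 1 z)).neg).congr_fderiv ?_
    ext v; simp [pr, Matrix.cons_val_succ]; try ring
  · exact hasFDerivAt_const _ _
  · refine (((hApply 4 z).sub (((hApply 0 z).const_mul (f/2)).mul (hApply 5 z))).sub
      ((hApply 2 z).const_mul (f/2))).neg.congr_fderiv ?_
    ext v; simp [pr, Matrix.cons_val_succ]; try ring
  · refine (((hApply 5 z).add (((hApply 0 z).const_mul (f/2)).mul (hApply 4 z))).add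
      ((hApply 1 z).const_mul (f/2))).neg.congr_fderiv ?_
    ext v; simp [pr, Matrix.cons_val_succ]; try ring
  · exact (hApply 6 z).neg
  · refine (((hApply 7 z).const_mul 2).add
      ((((hApply 1 z).mul (hApply 1 z)).add ((hApply 2 z).mul (hApply 2 z))).const_mul
        (f/2*(f/2)))).neg.congr_fderiv ?_
    ext v; simp [pr, Matrix.cons_val_succ]; try ring
  · refine ((hApply 8 z).const_mul 2).neg.congr_fderiv ?_
    ext v; simp [pr, Matrix.cons_val_succ]; try ring

lemma hasFDerivAt_Pf (f : ℝ) (z : Fin 9 → ℝ) : HasFDerivAt (Pf f) (PfL f) z := by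
  apply hasFDerivAt_pi''
  intro i
  fin_cases i <;>
    simp only [Pf, PfL, ContinuousLinearMap.proj_pi, Matrix.cons_val_zero, Matrix.cons_val_one,
      Matrix.head_cons, Matrix.cons_val_succ, Fin.isValue]
  · exact hasFDerivAt_const _ _
  · exact (hApply 2 z).const_mul (f/2)
  · exact ((hApply 1 z).const_mul (f/2)).neg
  · exact hasFDerivAt_const _ _
  · exact (hApply 5 z).const_mul (f/2)
  · exact ((hApply 4 z).const_mul (f/2)).neg
  · exact hasFDerivAt_const _ _
  · exact hasFDerivAt_const _ _
  · exact hasFDerivAt_const _ _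

/-- In `g_f` (`f ≠ 0`) the pair `(P_f, D₁)` realizes the two-dimensional nonabelian
Lie algebra: `[D₁, P_f] = −P_f`, mirroring `[D₁, ∂_t] = −∂_t` in `g₀`. -/
theorem bracket_D1f_Pf (f : ℝ) (hf : f ≠ 0) :
    bracket (D1f f) (Pf f) = fun z => -(Pf f z) := by
  funext z
  have h1 := (hasFDerivAt_D1f f z).fderiv
  have h2 := (hasFDerivAt_Pf f z).fderiv
  funext i
  simp only [bracket, h1, h2, Pi.sub_apply, Pi.neg_apply]
  fin_cases i <;>
    (simp [D1L, PfL, D1f, Pf, pr, Matrix.cons_val_succ]; try ring)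
end

section
/- Within the Lie algebra g₀ spanned by D₁, D₂, D₃, P, J, S, X(γ), Z(α) (with the commutation relations of the nonrotating primitive equations), the span i = ⟨X(γ), Z(α), S⟩ (over all smooth function parameters) is an ideal: for every element Q of g₀ and every element W of i, the bracket [Q,W] lies in i. Moreover ⟨Z(α)⟩ and ⟨S⟩ are abelian ideals of g₀. -/
section
variable {L : Type*} [LieRing L] [LieAlgebra ℝ L]

/-- The generators `X(γ)` over smooth pairs `γ = (γ¹,γ²)`. -/
def Xgens (X : (ℝ → ℝ) → (ℝ → ℝ) → L) : Set L :=
  {w | ∃ γ1 γ2 : ℝ → ℝ, ContDiff ℝ (⊤ : ℕ∞) γ1 ∧ ContDiff ℝ (⊤ : ℕ∞) γ2 ∧ w = X γ1 γ2}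

/-- The generators `Z(α)` over smooth functions `α`. -/
def Zgens (Z : (ℝ → ℝ) → L) : Set L :=
  {w | ∃ α : ℝ → ℝ, ContDiff ℝ (⊤ : ℕ∞) α ∧ w = Z α}

end

private lemma brk_span {L : Type*} [LieRing L] [LieAlgebra ℝ L]
    {s t : Set L} {M : Submodule ℝ L}
    (h : ∀ q ∈ s, ∀ w ∈ t, ⁅q, w⁆ ∈ M) :
    ∀ Q ∈ Submodule.span ℝ s, ∀ W ∈ Submodule.span ℝ t, ⁅Q, W⁆ ∈ M := by
  intro Q hQ
  induction hQ using Submodule.span_induction with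
  | mem q hq =>
    intro W hW
    induction hW using Submodule.span_induction with
    | mem w hw => exact h q hq w hw
    | zero => simp
    | add _ _ _ _ h1 h2 => rw [lie_add]; exact M.add_mem h1 h2
    | smul c _ _ h1 => rw [lie_smul]; exact M.smul_mem c h1
  | zero => intro W hW; simp
  | add _ _ _ _ h1 h2 => intro W hW; rw [add_lie]; exact M.add_mem (h1 W hW) (h2 W hW)
  | smul c _ _ h1 => intro W hW; rw [smul_lie]; exact M.smul_mem c (h1 W hW)

private lemma brk_span_zero {L : Type*} [LieRing L] [LieAlgebra ℝ L]
    {s t : Set L} (h : ∀ q ∈ s, ∀ w ∈ t, ⁅q, w⁆ = (0 : L)) :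
    ∀ Q ∈ Submodule.span ℝ s, ∀ W ∈ Submodule.span ℝ t, ⁅Q, W⁆ = 0 := by
  have := brk_span (M := (⊥ : Submodule ℝ L)) (s := s) (t := t)
    (by intro q hq w hw; simpa using h q hq w hw)
  intro Q hQ W hW
  simpa using this Q hQ W hW

private lemma deriv_smooth {f : ℝ → ℝ} (hf : ContDiff ℝ (⊤ : ℕ∞) f) :
    ContDiff ℝ (⊤ : ℕ∞) (deriv f) :=
  (contDiff_succ_iff_deriv.mp (show ContDiff ℝ (((⊤ : ℕ∞) : WithTop ℕ∞) + 1) f by rwa [← WithTop.coe_one, ← WithTop.coe_add, top_add])).2.2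

/-- In the Lie algebra `g₀` of the nonrotating primitive equations, spanned by
`D₁, D₂, D₃, P, J, S, X(γ), Z(α)` with the stated commutation relations,
`i = ⟨X(γ), Z(α), S⟩` is an ideal, and `⟨Z(α)⟩` and `⟨S⟩` are abelian ideals. -/
theorem ideals_of_g0 {L : Type*} [LieRing L] [LieAlgebra ℝ L] (κ : ℝ)
    (D1 D2 D3 P J S : L) (X : (ℝ → ℝ) → (ℝ → ℝ) → L) (Z : (ℝ → ℝ) → L)
    -- nonzero commutation relations
    (hD1P : ⁅D1, P⁆ = -P)
    (hD1S : ⁅D1, S⁆ = (2 : ℝ) • S)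
    (hD1X : ∀ γ1 γ2 : ℝ → ℝ, ContDiff ℝ (⊤ : ℕ∞) γ1 → ContDiff ℝ (⊤ : ℕ∞) γ2 →
      ⁅D1, X γ1 γ2⁆ = X (fun t => t * deriv γ1 t) (fun t => t * deriv γ2 t))
    (hD1Z : ∀ α : ℝ → ℝ, ContDiff ℝ (⊤ : ℕ∞) α →
      ⁅D1, Z α⁆ = Z (fun t => 2 * α t + t * deriv α t))
    (hD2S : ⁅D2, S⁆ = (-2 : ℝ) • S)
    (hD2X : ∀ γ1 γ2 : ℝ → ℝ, ContDiff ℝ (⊤ : ℕ∞) γ1 → ContDiff ℝ (⊤ : ℕ∞) γ2 →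
      ⁅D2, X γ1 γ2⁆ = -X γ1 γ2)
    (hD2Z : ∀ α : ℝ → ℝ, ContDiff ℝ (⊤ : ℕ∞) α → ⁅D2, Z α⁆ = (-2 : ℝ) • Z α)
    (hD3S : ⁅D3, S⁆ = κ • S)
    (hPX : ∀ γ1 γ2 : ℝ → ℝ, ContDiff ℝ (⊤ : ℕ∞) γ1 → ContDiff ℝ (⊤ : ℕ∞) γ2 →
      ⁅P, X γ1 γ2⁆ = X (deriv γ1) (deriv γ2))
    (hPZ : ∀ α : ℝ → ℝ, ContDiff ℝ (⊤ : ℕ∞) α → ⁅P, Z α⁆ = Z (deriv α))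
    (hJX : ∀ γ1 γ2 : ℝ → ℝ, ContDiff ℝ (⊤ : ℕ∞) γ1 → ContDiff ℝ (⊤ : ℕ∞) γ2 →
      ⁅J, X γ1 γ2⁆ = X γ2 (fun t => -γ1 t))
    (hXX : ∀ γ1 γ2 σ1 σ2 : ℝ → ℝ, ContDiff ℝ (⊤ : ℕ∞) γ1 → ContDiff ℝ (⊤ : ℕ∞) γ2 →
      ContDiff ℝ (⊤ : ℕ∞) σ1 → ContDiff ℝ (⊤ : ℕ∞) σ2 →
      ⁅X γ1 γ2, X σ1 σ2⁆ = Z (fun t => σ1 t * deriv (deriv γ1) t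
        + σ2 t * deriv (deriv γ2) t - γ1 t * deriv (deriv σ1) t
        - γ2 t * deriv (deriv σ2) t))
    -- all other brackets of basis elements vanish
    (hD1D2 : ⁅D1, D2⁆ = 0) (hD1D3 : ⁅D1, D3⁆ = 0) (hD1J : ⁅D1, J⁆ = 0)
    (hD2D3 : ⁅D2, D3⁆ = 0) (hD2P : ⁅D2, P⁆ = 0) (hD2J : ⁅D2, J⁆ = 0)
    (hD3P : ⁅D3, P⁆ = 0) (hD3J : ⁅D3, J⁆ = 0)
    (hD3X : ∀ γ1 γ2 : ℝ → ℝ, ContDiff ℝ (⊤ : ℕ∞) γ1 → ContDiff ℝ (⊤ : ℕ∞) γ2 → ⁅D3, X γ1 γ2⁆ = 0)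
    (hD3Z : ∀ α : ℝ → ℝ, ContDiff ℝ (⊤ : ℕ∞) α → ⁅D3, Z α⁆ = 0)
    (hPJ : ⁅P, J⁆ = 0) (hPS : ⁅P, S⁆ = 0) (hJS : ⁅J, S⁆ = 0)
    (hJZ : ∀ α : ℝ → ℝ, ContDiff ℝ (⊤ : ℕ∞) α → ⁅J, Z α⁆ = 0)
    (hXS : ∀ γ1 γ2 : ℝ → ℝ, ContDiff ℝ (⊤ : ℕ∞) γ1 → ContDiff ℝ (⊤ : ℕ∞) γ2 → ⁅X γ1 γ2, S⁆ = 0)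
    (hXZ : ∀ γ1 γ2 α : ℝ → ℝ, ContDiff ℝ (⊤ : ℕ∞) γ1 → ContDiff ℝ (⊤ : ℕ∞) γ2 → ContDiff ℝ (⊤ : ℕ∞) α →
      ⁅X γ1 γ2, Z α⁆ = 0)
    (hZZ : ∀ α α' : ℝ → ℝ, ContDiff ℝ (⊤ : ℕ∞) α → ContDiff ℝ (⊤ : ℕ∞) α' → ⁅Z α, Z α'⁆ = 0)
    (hZS : ∀ α : ℝ → ℝ, ContDiff ℝ (⊤ : ℕ∞) α → ⁅Z α, S⁆ = 0) :
    (∀ Q ∈ Submodule.span ℝ ({D1, D2, D3, P, J, S} ∪ Xgens X ∪ Zgens Z),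
      ∀ W ∈ Submodule.span ℝ (Xgens X ∪ Zgens Z ∪ {S}),
        ⁅Q, W⁆ ∈ Submodule.span ℝ (Xgens X ∪ Zgens Z ∪ {S})) ∧
    (∀ Q ∈ Submodule.span ℝ ({D1, D2, D3, P, J, S} ∪ Xgens X ∪ Zgens Z),
      ∀ W ∈ Submodule.span ℝ (Zgens Z), ⁅Q, W⁆ ∈ Submodule.span ℝ (Zgens Z)) ∧
    (∀ W1 ∈ Submodule.span ℝ (Zgens Z), ∀ W2 ∈ Submodule.span ℝ (Zgens Z),
      ⁅W1, W2⁆ = 0) ∧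
    (∀ Q ∈ Submodule.span ℝ ({D1, D2, D3, P, J, S} ∪ Xgens X ∪ Zgens Z),
      ∀ W ∈ Submodule.span ℝ ({S} : Set L), ⁅Q, W⁆ ∈ Submodule.span ℝ ({S} : Set L)) ∧
    (∀ W1 ∈ Submodule.span ℝ ({S} : Set L), ∀ W2 ∈ Submodule.span ℝ ({S} : Set L),
      ⁅W1, W2⁆ = 0) := by
  set I : Set L := Xgens X ∪ Zgens Z ∪ {S} with hI
  -- membership helpers
  have hXI : ∀ γ1 γ2 : ℝ → ℝ, ContDiff ℝ (⊤ : ℕ∞) γ1 → ContDiff ℝ (⊤ : ℕ∞) γ2 →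
      X γ1 γ2 ∈ Submodule.span ℝ I := fun γ1 γ2 h1 h2 =>
    Submodule.subset_span (Or.inl (Or.inl ⟨γ1, γ2, h1, h2, rfl⟩))
  have hZI : ∀ α : ℝ → ℝ, ContDiff ℝ (⊤ : ℕ∞) α → Z α ∈ Submodule.span ℝ I :=
    fun α hα => Submodule.subset_span (Or.inl (Or.inr ⟨α, hα, rfl⟩))
  have hSI : S ∈ Submodule.span ℝ I := Submodule.subset_span (Or.inr rfl)
  have hSS : S ∈ Submodule.span ℝ ({S} : Set L) := Submodule.subset_span rfl
  have hZZ' : ∀ α : ℝ → ℝ, ContDiff ℝ (⊤ : ℕ∞) α → Z α ∈ Submodule.span ℝ (Zgens Z) :=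
    fun α hα => Submodule.subset_span ⟨α, hα, rfl⟩
  -- generator-level computations
  have genS : ∀ q ∈ ({D1, D2, D3, P, J, S} ∪ Xgens X ∪ Zgens Z : Set L),
      ⁅q, S⁆ ∈ Submodule.span ℝ ({S} : Set L) := by
    rintro q ((hq | hq) | hq)
    · simp only [Set.mem_insert_iff, Set.mem_singleton_iff] at hq
      rcases hq with rfl | rfl | rfl | rfl | rfl | rfl
      · rw [hD1S]; exact Submodule.smul_mem _ _ hSS
      · rw [hD2S]; exact Submodule.smul_mem _ _ hSS
      · rw [hD3S]; exact Submodule.smul_mem _ _ hSS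
      · rw [hPS]; exact Submodule.zero_mem _
      · rw [hJS]; exact Submodule.zero_mem _
      · rw [lie_self]; exact Submodule.zero_mem _
    · obtain ⟨γ1, γ2, h1, h2, rfl⟩ := hq
      rw [hXS γ1 γ2 h1 h2]; exact Submodule.zero_mem _
    · obtain ⟨α, hα, rfl⟩ := hq
      rw [hZS α hα]; exact Submodule.zero_mem _
  have genZ : ∀ q ∈ ({D1, D2, D3, P, J, S} ∪ Xgens X ∪ Zgens Z : Set L),
      ∀ α : ℝ → ℝ, ContDiff ℝ (⊤ : ℕ∞) α → ⁅q, Z α⁆ ∈ Submodule.span ℝ (Zgens Z) := by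
    rintro q ((hq | hq) | hq) α hα
    · simp only [Set.mem_insert_iff, Set.mem_singleton_iff] at hq
      rcases hq with rfl | rfl | rfl | rfl | rfl | rfl
      · rw [hD1Z α hα]
        exact hZZ' _ (((contDiff_const (c := (2:ℝ))).mul hα).add
          (contDiff_id.mul (deriv_smooth hα)))
      · rw [hD2Z α hα]; exact Submodule.smul_mem _ _ (hZZ' α hα)
      · rw [hD3Z α hα]; exact Submodule.zero_mem _
      · rw [hPZ α hα]; exact hZZ' _ (deriv_smooth hα)
      · rw [hJZ α hα]; exact Submodule.zero_mem _
      · rw [← lie_skew, hZS α hα, neg_zero]; exact Submodule.zero_mem _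
    · obtain ⟨γ1, γ2, h1, h2, rfl⟩ := hq
      rw [hXZ γ1 γ2 α h1 h2 hα]; exact Submodule.zero_mem _
    · obtain ⟨α', hα', rfl⟩ := hq
      rw [hZZ α' α hα' hα]; exact Submodule.zero_mem _
  have genX : ∀ q ∈ ({D1, D2, D3, P, J, S} ∪ Xgens X ∪ Zgens Z : Set L),
      ∀ γ1 γ2 : ℝ → ℝ, ContDiff ℝ (⊤ : ℕ∞) γ1 → ContDiff ℝ (⊤ : ℕ∞) γ2 →
      ⁅q, X γ1 γ2⁆ ∈ Submodule.span ℝ I := by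
    rintro q ((hq | hq) | hq) γ1 γ2 h1 h2
    · simp only [Set.mem_insert_iff, Set.mem_singleton_iff] at hq
      rcases hq with rfl | rfl | rfl | rfl | rfl | rfl
      · rw [hD1X γ1 γ2 h1 h2]
        exact hXI _ _ (contDiff_id.mul (deriv_smooth h1))
          (contDiff_id.mul (deriv_smooth h2))
      · rw [hD2X γ1 γ2 h1 h2]; exact Submodule.neg_mem _ (hXI _ _ h1 h2)
      · rw [hD3X γ1 γ2 h1 h2]; exact Submodule.zero_mem _
      · rw [hPX γ1 γ2 h1 h2]
        exact hXI _ _ (deriv_smooth h1) (deriv_smooth h2)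
      · rw [hJX γ1 γ2 h1 h2]; exact hXI _ _ h2 h1.neg
      · rw [← lie_skew, hXS γ1 γ2 h1 h2, neg_zero]; exact Submodule.zero_mem _
    · obtain ⟨σ1, σ2, hs1, hs2, rfl⟩ := hq
      rw [hXX σ1 σ2 γ1 γ2 hs1 hs2 h1 h2]
      exact hZI _ ((((h1.mul (deriv_smooth (deriv_smooth hs1))).add
        (h2.mul (deriv_smooth (deriv_smooth hs2)))).sub
        (hs1.mul (deriv_smooth (deriv_smooth h1)))).sub
        (hs2.mul (deriv_smooth (deriv_smooth h2))))
    · obtain ⟨α, hα, rfl⟩ := hq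
      rw [← lie_skew, hXZ γ1 γ2 α h1 h2 hα, neg_zero]; exact Submodule.zero_mem _
  have hZI' : Submodule.span ℝ (Zgens Z) ≤ Submodule.span ℝ I :=
    Submodule.span_mono fun w hw => Or.inl (Or.inr hw)
  refine ⟨?_, ?_, ?_, ?_, ?_⟩
  · refine brk_span ?_
    rintro q hq w ((hw | hw) | hw)
    · obtain ⟨γ1, γ2, h1, h2, rfl⟩ := hw
      exact genX q hq γ1 γ2 h1 h2
    · obtain ⟨α, hα, rfl⟩ := hw
      exact hZI' (genZ q hq α hα)
    · rw [show w = S from hw]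
      exact (Submodule.span_mono (fun x hx => Or.inr hx : ({S} : Set L) ⊆ I))
        (genS q hq)
  · refine brk_span ?_
    rintro q hq w ⟨α, hα, rfl⟩
    exact genZ q hq α hα
  · refine brk_span_zero ?_
    rintro q ⟨α, hα, rfl⟩ w ⟨α', hα', rfl⟩
    exact hZZ α α' hα hα'
  · refine brk_span ?_
    rintro q hq w hw
    rw [show w = S from hw]
    exact genS q hq
  · refine brk_span_zero ?_
    rintro q hq w hw
    rw [show q = S from hq, show w = S from hw]
    exact lie_self S
end
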